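/- Let r(z,w) = Re w + 100(|z|¹⁰ + |z|² Re(z⁸)) + |z|⁶ Im w + |z|² (Im w)². Then there exists c > 0 such that r(z, z¹⁶) ≥ c|z|¹⁶ for all z ∈ ℂ with |z| sufficiently small. -/

import Mathlib

/-!
Put `s = |z|`, `t = Re z⁸` and `y = Im z¹⁶`, so that `Re z¹⁶ = 2t² - s¹⁶`, `|t| ≤ s⁸` and
`|y| ≤ s¹⁶`. Writing `t = a - s⁸` with `0 ≤ a ≤ 2s⁸`, the terms free of `Im w` add up to
`s¹⁶ + a (100 s² - 4 s⁸) + 2a²`, which is at least `s¹⁶` for `s ≤ 1`; the only negative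
contribution left is `|z|⁶ Im w ≥ -s²²`, which is negligible against `s¹⁶` for small `s`.
-/

lemma Complex.re_sq_eq_two_mul_re_sq_sub_norm_sq (w : ℂ) :
    (w ^ 2).re = 2 * w.re ^ 2 - ‖w‖ ^ 2 := by
  rw [pow_two, Complex.mul_re]
  linarith [Complex.sq_norm_sub_sq_re w]

lemma Complex.abs_re_pow_le (z : ℂ) (n : ℕ) : |(z ^ n).re| ≤ ‖z‖ ^ n :=
  norm_pow z n ▸ Complex.abs_re_le_norm _

lemma Complex.abs_im_pow_le (z : ℂ) (n : ℕ) : |(z ^ n).im| ≤ ‖z‖ ^ n :=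
  norm_pow z n ▸ Complex.abs_im_le_norm _

lemma bloom_real_lower_bound {s t y : ℝ} (hs₀ : 0 ≤ s) (hs₁ : s ≤ 1)
    (ht : |t| ≤ s ^ 8) (hy : |y| ≤ s ^ 16) :
    (1 - s ^ 6) * s ^ 16 ≤
      (2 * t ^ 2 - s ^ 16) + 100 * (s ^ 10 + s ^ 2 * t) + s ^ 6 * y + s ^ 2 * y ^ 2 := by
  have ha : 0 ≤ s ^ 8 + t := by linarith [neg_abs_le t]
  have hcoef : 0 ≤ 100 * s ^ 2 - 4 * s ^ 8 := by
    have : s ^ 8 ≤ s ^ 2 := pow_le_pow_of_le_one hs₀ hs₁ (by norm_num)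
    nlinarith [pow_nonneg hs₀ 2]
  have hmixed : -s ^ 22 ≤ s ^ 6 * y := by
    have := mul_le_mul_of_nonneg_left (neg_le_of_abs_le hy) (pow_nonneg hs₀ 6)
    linarith
  nlinarith [mul_nonneg ha hcoef, sq_nonneg (s ^ 8 + t), mul_nonneg (pow_nonneg hs₀ 2) (sq_nonneg y)]

/-- with `r(z,w) = Re w + 100(|z|¹⁰ + |z|²Re(z⁸)) + |z|⁶ Im w + |z|²(Im w)²`,
there is `c > 0` with `r(z, z¹⁶) ≥ c|z|¹⁶` for all sufficiently small `z`. -/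
theorem stmt_13 :
    ∃ c > 0, ∃ δ > 0, ∀ z : ℂ, ‖z‖ < δ →
      c * ‖z‖ ^ 16 ≤
        (z ^ 16).re + 100 * (‖z‖ ^ 10 + ‖z‖ ^ 2 * (z ^ 8).re)
          + ‖z‖ ^ 6 * (z ^ 16).im
          + ‖z‖ ^ 2 * ((z ^ 16).im) ^ 2 := by
  refine ⟨1 / 2, by norm_num, 1 / 2, by norm_num, fun z hz => ?_⟩
  have hs₀ : 0 ≤ ‖z‖ := norm_nonneg z
  have hre : (z ^ 16).re = 2 * (z ^ 8).re ^ 2 - ‖z‖ ^ 16 := by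
    rw [show z ^ 16 = (z ^ 8) ^ 2 by ring, Complex.re_sq_eq_two_mul_re_sq_sub_norm_sq, norm_pow]
    ring
  have hbound := bloom_real_lower_bound hs₀ (by linarith) (Complex.abs_re_pow_le z 8)
    (Complex.abs_im_pow_le z 16)
  have hs₆ : ‖z‖ ^ 6 ≤ 1 / 2 := by
    calc ‖z‖ ^ 6 ≤ (1 / 2) ^ 6 := pow_le_pow_left₀ hs₀ hz.le 6
      _ ≤ 1 / 2 := by norm_num
  rw [hre]
  nlinarith [pow_nonneg hs₀ 16]
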